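/- The free Poisson (Marchenko–Pastur) distribution of parameter 1 has k-th moment equal to the k-th Catalan number C_k = (1/(k+1))·binom(2k,k). -/

import Mathlib

/-!
Substituting x = 4 sin² θ with θ ∈ (0, π/2) turns the free Poisson law into the measure
(4/π) cos² θ dθ, so its k-th moment is (4^(k+1)/π) ∫₀^{π/2} sin^(2k) θ cos² θ dθ. Since
cos² = 1 - sin², this is a difference of two consecutive Wallis integrals, which equals
π C(2k, k) / (4^(k+1) (k+1)).
-/

open MeasureTheory Real

/-- The free Poisson (Marchenko–Pastur) distribution of parameter 1,
with density √(x(4-x))/(2πx) on (0, 4]. -/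
noncomputable def freePoisson : Measure ℝ :=
  (volume.restrict (Set.Ioc (0 : ℝ) 4)).withDensity
    (fun x => ENNReal.ofReal (Real.sqrt (x * (4 - x)) / (2 * π * x)))

open Set
open scoped NNReal ENNReal

noncomputable def freePoissonDensity (x : ℝ) : ℝ := √(x * (4 - x)) / (2 * π * x)

lemma freePoisson_eq_withDensity :
    freePoisson = (volume.restrict (Ioc (0 : ℝ) 4)).withDensity
      fun x => ((freePoissonDensity x).toNNReal : ℝ≥0∞) :=
  rfl

section

variable {E : Type*} [NormedAddCommGroup E] [NormedSpace ℝ E]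

lemma integral_freePoisson (g : ℝ → E) :
    ∫ x, g x ∂freePoisson = ∫ x in Ioo 0 4, freePoissonDensity x • g x := by
  have hmeas : Measurable fun x => (freePoissonDensity x).toNNReal := by
    unfold freePoissonDensity
    fun_prop
  rw [freePoisson_eq_withDensity, integral_withDensity_eq_integral_smul hmeas,
    ← integral_Ioc_eq_integral_Ioo]
  refine setIntegral_congr_fun measurableSet_Ioc fun x hx => ?_
  have hdens : 0 ≤ freePoissonDensity x := by
    have := hx.1
    unfold freePoissonDensity
    positivity
  rw [NNReal.smul_def, Real.coe_toNNReal _ hdens]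

lemma sin_pos_and_cos_pos_of_mem_Ioo {θ : ℝ} (hθ : θ ∈ Ioo 0 (π / 2)) :
    0 < sin θ ∧ 0 < cos θ :=
  ⟨sin_pos_of_pos_of_lt_pi hθ.1 (by linarith [hθ.2, pi_pos]),
    cos_pos_of_mem_Ioo ⟨by linarith [hθ.1, pi_pos], hθ.2⟩⟩

lemma strictMonoOn_four_mul_sin_sq : StrictMonoOn (fun θ => 4 * sin θ ^ 2) (Icc 0 (π / 2)) := by
  intro a ha b hb hab
  have hsin : sin a < sin b :=
    strictMonoOn_sin ⟨by linarith [ha.1, pi_pos], ha.2⟩ ⟨by linarith [hb.1, pi_pos], hb.2⟩ hab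
  have ha0 : 0 ≤ sin a := sin_nonneg_of_nonneg_of_le_pi ha.1 (by linarith [ha.2, pi_pos])
  simp only
  gcongr

lemma image_four_mul_sin_sq_Ioo : (fun θ => 4 * sin θ ^ 2) '' Ioo 0 (π / 2) = Ioo 0 4 := by
  rw [ContinuousOn.image_Ioo_of_strictMonoOn (by positivity) (by fun_prop)
    strictMonoOn_four_mul_sin_sq]
  simp

lemma setIntegral_Ioo_zero_four_eq_setIntegral_four_mul_sin_sq (g : ℝ → E) :
    ∫ x in Ioo 0 4, g x =
      ∫ θ in Ioo 0 (π / 2), (8 * sin θ * cos θ) • g (4 * sin θ ^ 2) := by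
  have hderiv : ∀ θ ∈ Ioo 0 (π / 2), HasDerivWithinAt (fun θ => 4 * sin θ ^ 2)
      (8 * sin θ * cos θ) (Ioo 0 (π / 2)) θ := fun θ _ =>
    (((hasDerivAt_sin θ).pow 2).const_mul 4).hasDerivWithinAt.congr_deriv (by ring)
  have hinj : InjOn (fun θ => 4 * sin θ ^ 2) (Ioo 0 (π / 2)) :=
    strictMonoOn_four_mul_sin_sq.injOn.mono Ioo_subset_Icc_self
  rw [← image_four_mul_sin_sq_Ioo,
    integral_image_eq_integral_abs_deriv_smul measurableSet_Ioo hderiv hinj]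
  refine setIntegral_congr_fun measurableSet_Ioo fun θ hθ => ?_
  obtain ⟨hsin, hcos⟩ := sin_pos_and_cos_pos_of_mem_Ioo hθ
  rw [abs_of_pos (by positivity)]

lemma mul_freePoissonDensity_four_mul_sin_sq {θ : ℝ} (hθ : θ ∈ Ioo 0 (π / 2)) :
    8 * sin θ * cos θ * freePoissonDensity (4 * sin θ ^ 2) = 4 / π * cos θ ^ 2 := by
  obtain ⟨hsin, hcos⟩ := sin_pos_and_cos_pos_of_mem_Ioo hθ
  have hsq : 4 * sin θ ^ 2 * (4 - 4 * sin θ ^ 2) = (4 * sin θ * cos θ) ^ 2 := by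
    linear_combination -16 * sin θ ^ 2 * sin_sq_add_cos_sq θ
  rw [freePoissonDensity, hsq, sqrt_sq (by positivity)]
  field_simp
  ring

lemma integral_freePoisson_eq_setIntegral_cos_sq (g : ℝ → E) :
    ∫ x, g x ∂freePoisson =
      ∫ θ in Ioo 0 (π / 2), (4 / π * cos θ ^ 2) • g (4 * sin θ ^ 2) := by
  rw [integral_freePoisson, setIntegral_Ioo_zero_four_eq_setIntegral_four_mul_sin_sq]
  refine setIntegral_congr_fun measurableSet_Ioo fun θ hθ => ?_
  rw [smul_smul, mul_freePoissonDensity_four_mul_sin_sq hθ]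

end

lemma integral_sin_pow_two_mul_succ_zero_pi_div_two (n : ℕ) :
    ∫ x in (0 : ℝ)..π / 2, sin x ^ (2 * (n + 1)) =
      (2 * n + 1) / (2 * n + 2) * ∫ x in (0 : ℝ)..π / 2, sin x ^ (2 * n) := by
  rw [show 2 * (n + 1) = 2 * n + 2 by ring, integral_sin_pow]
  simp

lemma integral_sin_pow_two_mul_zero_pi_div_two (n : ℕ) :
    ∫ x in (0 : ℝ)..π / 2, sin x ^ (2 * n) = π / 2 * n.centralBinom / 4 ^ n := by
  induction n with
  | zero => simp
  | succ n ih =>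
    have hrec : ((n : ℝ) + 1) * (n + 1).centralBinom = 2 * (2 * n + 1) * n.centralBinom := by
      exact_mod_cast Nat.succ_mul_centralBinom_succ n
    rw [integral_sin_pow_two_mul_succ_zero_pi_div_two, ih]
    field_simp
    linear_combination (-(2 * 4 ^ n : ℝ)) * hrec

lemma integral_sin_pow_two_mul_mul_cos_sq_zero_pi_div_two (n : ℕ) :
    ∫ x in (0 : ℝ)..π / 2, sin x ^ (2 * n) * cos x ^ 2 =
      π * n.centralBinom / (4 ^ (n + 1) * (n + 1)) := by
  have hsplit : ∀ x, sin x ^ (2 * n) * cos x ^ 2 = sin x ^ (2 * n) - sin x ^ (2 * (n + 1)) := by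
    intro x
    rw [cos_sq', mul_add_one, pow_add]
    ring
  simp only [hsplit]
  rw [intervalIntegral.integral_sub (by apply Continuous.intervalIntegrable; fun_prop)
      (by apply Continuous.intervalIntegrable; fun_prop),
    integral_sin_pow_two_mul_succ_zero_pi_div_two, integral_sin_pow_two_mul_zero_pi_div_two]
  field_simp
  ring

theorem moments_freePoisson (k : ℕ) :
    ∫ x : ℝ, x ^ k ∂freePoisson = (Nat.choose (2 * k) k : ℝ) / (k + 1) := by
  have hintegrand : ∀ θ, (4 / π * cos θ ^ 2) • (4 * sin θ ^ 2) ^ k =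
      4 ^ (k + 1) / π * (sin θ ^ (2 * k) * cos θ ^ 2) := fun θ => by
    rw [smul_eq_mul, mul_pow, ← pow_mul]
    ring
  rw [integral_freePoisson_eq_setIntegral_cos_sq]
  simp only [hintegrand]
  rw [integral_const_mul, ← integral_Ioc_eq_integral_Ioo,
    ← intervalIntegral.integral_of_le (by positivity),
    integral_sin_pow_two_mul_mul_cos_sq_zero_pi_div_two, Nat.centralBinom_eq_two_mul_choose]
  field_simp
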